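/- Consider the one-step LSTM map Φ taking state s = (c, h) and input x to s_+ = (c_+, h_+) via f = σ(W_f h + U_f x), i = σ(W_i h + U_i x), o = σ(W_o h + U_o x), z = tanh(W_z h + U_z x), c_+ = i ∘ z + f ∘ c, h_+ = o ∘ tanh(c_+). Fix f_∞ < 1 and C ≥ 0, and suppose all states considered satisfy ‖c‖_∞, ‖c'‖_∞ ≤ C and all forget-gate outputs satisfy ‖f‖_∞ ≤ f_∞. Set μ = (‖W_i‖_∞ + C‖W_f‖_∞)/4 + ‖W_z‖_∞. Then for any two states s = (c, h), s' = (c', h') and any common input x: ‖c_+ − c'_+‖_∞ ≤ μ‖h − h'‖_∞ + f_∞‖c − c'‖_∞ and ‖h_+ − h'_+‖_∞ ≤ (μ + ‖W_o‖_∞/4)‖h − h'‖_∞ + f_∞‖c − c'‖_∞. Consequently, if λ := μ + ‖W_o‖_∞/4 + f_∞ < 1, then ‖s_+ − s'_+‖_∞ ≤ λ‖s − s'‖_∞, i.e. the LSTM map is λ-contractive in the ℓ∞ norm on such states. -/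

import Mathlib

/-!
Each gate is `g ∘ (W h + U x)` with `g = σ` (`1/4`-Lipschitz) or `tanh` (`1`-Lipschitz), so in the
sup norm two gates at `h, h'` differ by at most `Lip(g) ‖W‖ ‖h - h'‖`. The sup norm is
submultiplicative for the coordinatewise product, and `a b - a' b' = a (b - b') + (a - a') b'`;
bounding the undifferenced factors by `|σ|, |tanh| ≤ 1`, `‖f‖ ≤ f_∞` and `‖c'‖ ≤ C` gives the
estimate for `c₊`, and the one for `h₊ = o ∘ tanh c₊` follows from it in the same way.
-/

attribute [local instance] Matrix.linftyOpNormedAddCommGroup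

/-- The logistic sigmoid `σ(z) = 1/(1 + e^{−z})`. -/
noncomputable def sigmoid (z : ℝ) : ℝ := 1 / (1 + Real.exp (-z))

theorem sigmoid_eq_real_sigmoid : sigmoid = Real.sigmoid := by
  funext t
  simp [sigmoid, Real.sigmoid_def]

theorem abs_sigmoid_le_one (t : ℝ) : |sigmoid t| ≤ 1 := by
  rw [sigmoid_eq_real_sigmoid, abs_of_pos (Real.sigmoid_pos t)]
  exact Real.sigmoid_le_one t

theorem lipschitzWith_sigmoid : LipschitzWith 4⁻¹ sigmoid := by
  rw [sigmoid_eq_real_sigmoid]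
  refine lipschitzWith_of_nnnorm_deriv_le differentiable_sigmoid fun t => ?_
  rw [← NNReal.coe_le_coe, coe_nnnorm, Real.deriv_sigmoid, Real.norm_eq_abs]
  have h0 := Real.sigmoid_pos t
  have h1 := Real.sigmoid_lt_one t
  rw [abs_of_pos (mul_pos h0 (sub_pos.2 h1))]
  push_cast
  nlinarith [sq_nonneg (2 * Real.sigmoid t - 1)]

theorem Real.tanh_eq_two_mul_sigmoid_sub_one (t : ℝ) :
    Real.tanh t = 2 * Real.sigmoid (2 * t) - 1 := by
  have hexp : Real.exp (-(2 * t)) = (Real.exp t ^ 2)⁻¹ := by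
    rw [Real.exp_neg, ← Real.exp_nat_mul]; ring_nf
  rw [Real.tanh_eq, Real.sigmoid_def, hexp, Real.exp_neg]
  field_simp
  ring

theorem Real.lipschitzWith_tanh : LipschitzWith 1 Real.tanh := by
  refine LipschitzWith.of_dist_le_mul fun a b => ?_
  have hσ := lipschitzWith_sigmoid.dist_le_mul (2 * a) (2 * b)
  rw [sigmoid_eq_real_sigmoid] at hσ
  simp only [Real.dist_eq, Real.tanh_eq_two_mul_sigmoid_sub_one, NNReal.coe_one, one_mul] at hσ ⊢
  calc |2 * Real.sigmoid (2 * a) - 1 - (2 * Real.sigmoid (2 * b) - 1)|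
      = 2 * |Real.sigmoid (2 * a) - Real.sigmoid (2 * b)| := by
        rw [← abs_two, ← abs_mul]; ring_nf
    _ ≤ 2 * (4⁻¹ * |2 * a - 2 * b|) := by gcongr; exact_mod_cast hσ
    _ = |a - b| := by rw [← mul_sub, abs_mul, abs_two]; ring

section Coordinatewise

variable {ι : Type*} [Fintype ι]

theorem norm_comp_sub_comp_le {g : ℝ → ℝ} {K : NNReal} (hg : LipschitzWith K g) (u v : ι → ℝ) :
    ‖g ∘ u - g ∘ v‖ ≤ K * ‖u - v‖ := by
  refine pi_norm_le_iff_of_nonneg (by positivity) |>.mpr fun j => ?_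
  calc ‖g (u j) - g (v j)‖ ≤ K * ‖u j - v j‖ := hg.norm_sub_le _ _
    _ ≤ K * ‖u - v‖ := by gcongr; exact norm_le_pi_norm (u - v) j

theorem norm_comp_le_one {g : ℝ → ℝ} (hg : ∀ t, |g t| ≤ 1) (u : ι → ℝ) : ‖g ∘ u‖ ≤ 1 :=
  pi_norm_le_iff_of_nonneg zero_le_one |>.mpr fun j => hg (u j)

end Coordinatewise

theorem norm_mul_sub_mul_le {R : Type*} [NonUnitalSeminormedRing R] (a b a' b' : R) :
    ‖a * b - a' * b'‖ ≤ ‖a‖ * ‖b - b'‖ + ‖a - a'‖ * ‖b'‖ := by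
  calc ‖a * b - a' * b'‖ = ‖a * (b - b') + (a - a') * b'‖ := by noncomm_ring
    _ ≤ ‖a‖ * ‖b - b'‖ + ‖a - a'‖ * ‖b'‖ :=
      (norm_add_le _ _).trans (add_le_add (norm_mul_le _ _) (norm_mul_le _ _))

section Lstm

variable {l m n : Type*} [Fintype m] [Fintype n]

def gate (g : ℝ → ℝ) (W : Matrix l m ℝ) (U : Matrix l n ℝ) (h : m → ℝ) (x : n → ℝ) : l → ℝ :=
  g ∘ (W.mulVec h + U.mulVec x)

variable [Fintype l]

theorem norm_gate_sub_gate_le {g : ℝ → ℝ} {K : NNReal} (hg : LipschitzWith K g)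
    (W : Matrix l m ℝ) (U : Matrix l n ℝ) (h h' : m → ℝ) (x : n → ℝ) :
    ‖gate g W U h x - gate g W U h' x‖ ≤ K * (‖W‖ * ‖h - h'‖) := by
  refine (norm_comp_sub_comp_le hg _ _).trans ?_
  rw [add_sub_add_right_eq_sub, ← Matrix.mulVec_sub]
  gcongr
  exact Matrix.linfty_opNorm_mulVec W (h - h')

theorem norm_cell_sub_cell_le (Wf Wi Wz : Matrix l m ℝ) (Uf Ui Uz : Matrix l n ℝ)
    (c c' : l → ℝ) (h h' : m → ℝ) (x : n → ℝ) {finf C : ℝ} (hc'C : ‖c'‖ ≤ C)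
    (hfb : ‖gate sigmoid Wf Uf h x‖ ≤ finf) :
    ‖(gate sigmoid Wi Ui h x * gate Real.tanh Wz Uz h x + gate sigmoid Wf Uf h x * c) -
        (gate sigmoid Wi Ui h' x * gate Real.tanh Wz Uz h' x + gate sigmoid Wf Uf h' x * c')‖ ≤
      ((‖Wi‖ + C * ‖Wf‖) / 4 + ‖Wz‖) * ‖h - h'‖ + finf * ‖c - c'‖ := by
  have hi : ‖gate sigmoid Wi Ui h x‖ ≤ 1 := norm_comp_le_one abs_sigmoid_le_one _
  have hz' : ‖gate Real.tanh Wz Uz h' x‖ ≤ 1 :=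
    norm_comp_le_one (fun t => (Real.abs_tanh_lt_one t).le) _
  have hdi := norm_gate_sub_gate_le lipschitzWith_sigmoid Wi Ui h h' x
  have hdz := norm_gate_sub_gate_le Real.lipschitzWith_tanh Wz Uz h h' x
  have hdf := norm_gate_sub_gate_le lipschitzWith_sigmoid Wf Uf h h' x
  rw [add_sub_add_comm]
  refine (norm_add_le _ _).trans ?_
  calc _ ≤ ‖gate sigmoid Wi Ui h x‖ * ‖gate Real.tanh Wz Uz h x - gate Real.tanh Wz Uz h' x‖
          + ‖gate sigmoid Wi Ui h x - gate sigmoid Wi Ui h' x‖ * ‖gate Real.tanh Wz Uz h' x‖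
          + (‖gate sigmoid Wf Uf h x‖ * ‖c - c'‖
            + ‖gate sigmoid Wf Uf h x - gate sigmoid Wf Uf h' x‖ * ‖c'‖) :=
        add_le_add (norm_mul_sub_mul_le _ _ _ _) (norm_mul_sub_mul_le _ _ _ _)
    _ ≤ 1 * (1 * (‖Wz‖ * ‖h - h'‖)) + 4⁻¹ * (‖Wi‖ * ‖h - h'‖) * 1
          + (finf * ‖c - c'‖ + 4⁻¹ * (‖Wf‖ * ‖h - h'‖) * C) := by
        gcongr <;> assumption
    _ = _ := by ring

theorem norm_hidden_sub_hidden_le (Wo : Matrix l m ℝ) (Uo : Matrix l n ℝ) (h h' : m → ℝ)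
    (x : n → ℝ) (cp cp' : l → ℝ) :
    ‖gate sigmoid Wo Uo h x * Real.tanh ∘ cp - gate sigmoid Wo Uo h' x * Real.tanh ∘ cp'‖ ≤
      ‖cp - cp'‖ + ‖Wo‖ / 4 * ‖h - h'‖ := by
  have ho : ‖gate sigmoid Wo Uo h x‖ ≤ 1 := norm_comp_le_one abs_sigmoid_le_one _
  have hdo := norm_gate_sub_gate_le lipschitzWith_sigmoid Wo Uo h h' x
  have htanh := norm_comp_sub_comp_le Real.lipschitzWith_tanh cp cp'
  have htanh' := norm_comp_le_one (fun t => (Real.abs_tanh_lt_one t).le) cp'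
  calc _ ≤ _ := norm_mul_sub_mul_le _ _ _ _
    _ ≤ 1 * (1 * ‖cp - cp'‖) + 4⁻¹ * (‖Wo‖ * ‖h - h'‖) * 1 := by
        gcongr <;> assumption
    _ = _ := by ring

end Lstm

theorem max_le_add_add_mul_max {a b p q α β γ : ℝ} (hα : 0 ≤ α) (hβ : 0 ≤ β) (hγ : 0 ≤ γ)
    (hq : 0 ≤ q) (ha : a ≤ α * q + γ * p) (hb : b ≤ (α + β) * q + γ * p) :
    max a b ≤ (α + β + γ) * max p q := by
  have hpM := le_max_left p q
  have hqM := le_max_right p q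
  apply max_le <;> nlinarith

theorem stmt_4_general (dd nn : ℕ) (finf C : ℝ)
    (Wf Wi Wo Wz : Matrix (Fin dd) (Fin dd) ℝ)
    (Uf Ui Uo Uz : Matrix (Fin dd) (Fin nn) ℝ)
    (c h c' h' : Fin dd → ℝ) (x : Fin nn → ℝ)
    (hc'C : ‖c'‖ ≤ C)
    (f i o z cp hp f' i' o' z' cp' hp' : Fin dd → ℝ)
    (hf : f = fun j => sigmoid ((Wf.mulVec h + Uf.mulVec x) j))
    (hi : i = fun j => sigmoid ((Wi.mulVec h + Ui.mulVec x) j))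
    (ho : o = fun j => sigmoid ((Wo.mulVec h + Uo.mulVec x) j))
    (hz : z = fun j => Real.tanh ((Wz.mulVec h + Uz.mulVec x) j))
    (hcp : cp = i * z + f * c)
    (hhp : hp = o * fun j => Real.tanh (cp j))
    (hf' : f' = fun j => sigmoid ((Wf.mulVec h' + Uf.mulVec x) j))
    (hi' : i' = fun j => sigmoid ((Wi.mulVec h' + Ui.mulVec x) j))
    (ho' : o' = fun j => sigmoid ((Wo.mulVec h' + Uo.mulVec x) j))
    (hz' : z' = fun j => Real.tanh ((Wz.mulVec h' + Uz.mulVec x) j))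
    (hcp' : cp' = i' * z' + f' * c')
    (hhp' : hp' = o' * fun j => Real.tanh (cp' j))
    (hfb : ‖f‖ ≤ finf) :
    ‖cp - cp'‖ ≤ ((‖Wi‖ + C * ‖Wf‖) / 4 + ‖Wz‖) * ‖h - h'‖ + finf * ‖c - c'‖ ∧
    ‖hp - hp'‖ ≤ ((‖Wi‖ + C * ‖Wf‖) / 4 + ‖Wz‖ + ‖Wo‖ / 4) * ‖h - h'‖ + finf * ‖c - c'‖ ∧
    ((‖Wi‖ + C * ‖Wf‖) / 4 + ‖Wz‖ + ‖Wo‖ / 4 + finf < 1 →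
      max ‖cp - cp'‖ ‖hp - hp'‖ ≤
        ((‖Wi‖ + C * ‖Wf‖) / 4 + ‖Wz‖ + ‖Wo‖ / 4 + finf) * max ‖c - c'‖ ‖h - h'‖) := by
  have hC : 0 ≤ C := (norm_nonneg c').trans hc'C
  have hfinf : 0 ≤ finf := (norm_nonneg f).trans hfb
  have hcell : ‖cp - cp'‖ ≤ ((‖Wi‖ + C * ‖Wf‖) / 4 + ‖Wz‖) * ‖h - h'‖ + finf * ‖c - c'‖ := by
    subst hf hi hz hf' hi' hz' hcp hcp'
    exact norm_cell_sub_cell_le Wf Wi Wz Uf Ui Uz c c' h h' x hc'C hfb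
  have hhidden : ‖hp - hp'‖ ≤ ‖cp - cp'‖ + ‖Wo‖ / 4 * ‖h - h'‖ := by
    subst ho ho' hhp hhp'
    exact norm_hidden_sub_hidden_le Wo Uo h h' x cp cp'
  refine ⟨hcell, by linarith, fun _ => max_le_add_add_mul_max (by positivity) (by positivity)
    hfinf (norm_nonneg _) hcell (by linarith)⟩

/-- one-step LSTM map contracts in the `ℓ∞` norm. With
`μ = (‖W_i‖_∞ + C‖W_f‖_∞)/4 + ‖W_z‖_∞`, for states with `‖c‖_∞, ‖c'‖_∞ ≤ C` and
forget gates bounded by `f_∞ < 1`: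
`‖c₊ − c'₊‖_∞ ≤ μ‖h − h'‖_∞ + f_∞‖c − c'‖_∞`,
`‖h₊ − h'₊‖_∞ ≤ (μ + ‖W_o‖_∞/4)‖h − h'‖_∞ + f_∞‖c − c'‖_∞`, and if
`λ = μ + ‖W_o‖_∞/4 + f_∞ < 1` then `‖s₊ − s'₊‖_∞ ≤ λ‖s − s'‖_∞` where
`‖s‖_∞ = max (‖c‖_∞) (‖h‖_∞)`. Vectors in `Fin dd → ℝ` carry the sup norm and
matrices the induced `ℓ∞` operator norm (max absolute row sum). -/
theorem stmt_4 (dd nn : ℕ) (finf C : ℝ) (hfinf : finf < 1) (hC : 0 ≤ C)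
    (Wf Wi Wo Wz : Matrix (Fin dd) (Fin dd) ℝ)
    (Uf Ui Uo Uz : Matrix (Fin dd) (Fin nn) ℝ)
    (c h c' h' : Fin dd → ℝ) (x : Fin nn → ℝ)
    (hcC : ‖c‖ ≤ C) (hc'C : ‖c'‖ ≤ C)
    (f i o z cp hp f' i' o' z' cp' hp' : Fin dd → ℝ)
    (hf : f = fun j => sigmoid ((Wf.mulVec h + Uf.mulVec x) j))
    (hi : i = fun j => sigmoid ((Wi.mulVec h + Ui.mulVec x) j))
    (ho : o = fun j => sigmoid ((Wo.mulVec h + Uo.mulVec x) j))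
    (hz : z = fun j => Real.tanh ((Wz.mulVec h + Uz.mulVec x) j))
    (hcp : cp = i * z + f * c)
    (hhp : hp = o * fun j => Real.tanh (cp j))
    (hf' : f' = fun j => sigmoid ((Wf.mulVec h' + Uf.mulVec x) j))
    (hi' : i' = fun j => sigmoid ((Wi.mulVec h' + Ui.mulVec x) j))
    (ho' : o' = fun j => sigmoid ((Wo.mulVec h' + Uo.mulVec x) j))
    (hz' : z' = fun j => Real.tanh ((Wz.mulVec h' + Uz.mulVec x) j))
    (hcp' : cp' = i' * z' + f' * c')
    (hhp' : hp' = o' * fun j => Real.tanh (cp' j))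
    (hfb : ‖f‖ ≤ finf) (hfb' : ‖f'‖ ≤ finf) :
    ‖cp - cp'‖ ≤ ((‖Wi‖ + C * ‖Wf‖) / 4 + ‖Wz‖) * ‖h - h'‖ + finf * ‖c - c'‖ ∧
    ‖hp - hp'‖ ≤ ((‖Wi‖ + C * ‖Wf‖) / 4 + ‖Wz‖ + ‖Wo‖ / 4) * ‖h - h'‖ + finf * ‖c - c'‖ ∧
    ((‖Wi‖ + C * ‖Wf‖) / 4 + ‖Wz‖ + ‖Wo‖ / 4 + finf < 1 →
      max ‖cp - cp'‖ ‖hp - hp'‖ ≤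
        ((‖Wi‖ + C * ‖Wf‖) / 4 + ‖Wz‖ + ‖Wo‖ / 4 + finf) * max ‖c - c'‖ ‖h - h'‖) :=
  stmt_4_general dd nn finf C Wf Wi Wo Wz Uf Ui Uo Uz c h c' h' x hc'C f i o z cp hp f' i' o' z' cp'
    hp' hf hi ho hz hcp hhp hf' hi' ho' hz' hcp' hhp' hfb
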